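/- arXiv:2504.21551 — 2 statements merged into one kernel-verified Lean document; each statement's English description precedes it below -/
import Mathlib

section
/- (Flattening) Let (A, m) be an iterative midpoint set with associated infinitary operation M, and write m₀(x) = x and mₙ(x₀, …, xₙ) = m(x₀, m_{n-1}(x₁, …, xₙ)) for n ≥ 1. Then for every double sequence (x_{ij})_{i,j∈ℕ} in A: Mᵢ(Mⱼ x_{ij}) = M_l m( m_{l+1}(x_{0(l+1)}, x_{1(l+1)}, …, x_{l(l+1)}, x_{ll}), m_{l+1}(x_{(l+1)0}, x_{(l+1)1}, …, x_{(l+1)l}, x_{ll}) ). -/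
/-- A midpoint operation: idempotent, commutative, satisfying transposition. -/
def IsMidpoint {A : Type} (m : A → A → A) : Prop :=
  (∀ x, m x x = x) ∧ (∀ x y, m x y = m y x) ∧
    (∀ x y z w, m (m x y) (m z w) = m (m x z) (m y w))

/-- Cancellation: `m x y = m x z` implies `y = z`. -/
def Cancellative {A : Type} (m : A → A → A) : Prop :=
  ∀ x y z, m x y = m x z → y = z

/-- Iterativity in the category of sets. -/
def Iterative {A : Type} (m : A → A → A) : Prop :=
  ∀ (X : Type) (c : X → A × X), ∃! u : X → A, ∀ x, u x = m (c x).1 (u (c x).2)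

/-- The unfolding property of an infinitary operation `M` with respect to `m`. -/
def Unfolding {A : Type} (m : A → A → A) (M : (ℕ → A) → A) : Prop :=
  ∀ x : ℕ → A, M x = m (x 0) (M fun i => x (i + 1))

/-- The canonicity property of an infinitary operation `M` with respect to `m`. -/
def Canonicity {A : Type} (m : A → A → A) (M : (ℕ → A) → A) : Prop :=
  ∀ x y : ℕ → A, (∀ i, y i = m (x i) (y (i + 1))) → y 0 = M x

/-- The derived `(n+1)`-ary midpoint operations: `m₀(x) = x` and
`mₙ(x₀,…,xₙ) = m(x₀, m_{n-1}(x₁,…,xₙ))`, applied to the first `n+1`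
entries of a sequence. -/
def mfold {A : Type} (m : A → A → A) : ℕ → (ℕ → A) → A
  | 0, x => x 0
  | n + 1, x => m (x 0) (mfold m n fun i => x (i + 1))

/-! In `Mᵢ (Mⱼ xᵢⱼ)` the entry `xᵢⱼ` has weight `2^-(i+j+2)`, and so it has on the right-hand side.
Splitting off `hook m x 0`, which carries `x₀₀, x₀₁, x₁₀`, leaves `Mᵢ Mⱼ` of a repacked double
sequence `deflate m x`, and `hook m x (l + 1) = hook m (deflate m x) l`; canonicity of `M` then
gives the theorem. The splitting identity holds because both of its sides obey the recursion
`f z = m (M (z 0)) (m (Mᵢ z (i+1) 0) (f (diagShift z)))` (peel off the first row, then the rest of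
the first column), whose solution is unique by iterativity. -/

section Flattening

variable {A : Type} {m : A → A → A} {M : (ℕ → A) → A}

namespace IsMidpoint

theorem idem (hm : IsMidpoint m) (x : A) : m x x = x := hm.1 x

theorem comm (hm : IsMidpoint m) (x y : A) : m x y = m y x := hm.2.1 x y

theorem medial (hm : IsMidpoint m) (x y z w : A) :
    m (m x y) (m z w) = m (m x z) (m y w) := hm.2.2 x y z w

/-- The rearrangement of nine summands behind `Unfolding.hook_deflate_peel`. -/
theorem peel_rearrange (hm : IsMidpoint m) (p q r s d e u v g : A) :
    m (m (m q p) (m r p)) (m (m (m (m d e) s) u) (m v g)) =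
      m (m p (m q u)) (m (m r v) (m (m (m d s) (m e s)) g)) := by
  have hs : m (m d s) (m e s) = m (m d e) s := by rw [hm.medial, hm.idem]
  have hp : m (m q p) (m r p) = m (m p p) (m q r) := by rw [hm.medial, hm.comm]
  rw [hs, hp]
  set c := m (m d e) s
  rw [hm.medial p p q r, hm.medial (m p q) (m p r) (m c u) (m v g), hm.medial p q c u,
    hm.medial p r v g, hm.medial (m p c) (m q u) (m p v) (m r g), hm.medial p c p v,
    hm.medial (m p p) (m c v) (m q u) (m r g), hm.idem p, hm.comm c v, hm.medial v c r g,
    hm.comm v r]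

end IsMidpoint

theorem Unfolding.shift (hM : Unfolding m M) (x : ℕ → A) (n : ℕ) :
    (M fun k => x (n + k)) = m (x n) (M fun k => x (n + 1 + k)) := by
  rw [hM]
  simp only [Nat.add_zero, Nat.add_right_comm n 1]
  rfl

namespace Iterative

theorem eq_of_rec (hit : Iterative m) {X : Type} (P : X → A) (s : X → X) {f g : X → A}
    (hf : ∀ x, f x = m (P x) (f (s x))) (hg : ∀ x, g x = m (P x) (g (s x))) : f = g :=
  (hit X fun x => (P x, s x)).unique hf hg

/-- Two functions obeying the same two-step recursion agree: run the recursion on `X × Bool`,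
the flag recording which of the two steps comes next. -/
theorem eq_of_rec₂ (hit : Iterative m) {X : Type} (P Q : X → A) (s : X → X) {f g : X → A}
    (hf : ∀ x, f x = m (P x) (m (Q x) (f (s x))))
    (hg : ∀ x, g x = m (P x) (m (Q x) (g (s x)))) : f = g := by
  let lift (h : X → A) : X × Bool → A := fun p => bif p.2 then h p.1 else m (Q p.1) (h (s p.1))
  have lift_rec : ∀ h : X → A, (∀ x, h x = m (P x) (m (Q x) (h (s x)))) →
      ∀ p, lift h p = m (bif p.2 then P p.1 else Q p.1) (lift h (bif p.2 then (p.1, false)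
        else (s p.1, true))) := by
    rintro h hh ⟨x, _ | _⟩
    · rfl
    · exact hh x
  have := hit.eq_of_rec _ _ (lift_rec f hf) (lift_rec g hg)
  funext x
  exact congrFun this (x, true)

theorem canonicity (hit : Iterative m) (hM : Unfolding m M) : Canonicity m M := by
  intro x y hy
  simpa using congrFun (hit.eq_of_rec x Nat.succ hy (hM.shift x)) 0

end Iterative

theorem Unfolding.M_pointwise_m (hm : IsMidpoint m) (hit : Iterative m) (hM : Unfolding m M)
    (u v : ℕ → A) : (M fun i => m (u i) (v i)) = m (M u) (M v) := by
  have := hit.canonicity hM _ (fun i => m (M fun k => u (i + k)) (M fun k => v (i + k)))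
    fun i => by rw [hM.shift u, hM.shift v, hm.medial]
  simpa using this.symm

theorem mfold_pointwise_m (hm : IsMidpoint m) :
    ∀ (n : ℕ) (u v : ℕ → A), mfold m n (fun i => m (u i) (v i)) = m (mfold m n u) (mfold m n v)
  | 0, _, _ => rfl
  | n + 1, u, v => by rw [mfold, mfold, mfold, hm.medial, mfold_pointwise_m hm n]

theorem mfold_congr : ∀ (n : ℕ) {u v : ℕ → A}, (∀ i ≤ n, u i = v i) →
    mfold m n u = mfold m n v
  | 0, _, _, h => h 0 le_rfl
  | n + 1, _, _, h => by
    rw [mfold, mfold, h 0 (Nat.zero_le _), mfold_congr n fun i hi => h (i + 1) (by omega)]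

theorem mfold_succ_eq_mfold_merge_last : ∀ (n : ℕ) (g : ℕ → A),
    mfold m (n + 1) g = mfold m n (fun i => if i = n then m (g n) (g (n + 1)) else g i)
  | 0, g => rfl
  | n + 1, g => by
    rw [mfold, mfold_succ_eq_mfold_merge_last n, mfold, if_neg (Nat.succ_ne_zero n).symm]
    congr 1
    exact mfold_congr n fun i _ => by simp only [Nat.add_right_cancel_iff]

def diagShift (x : ℕ → ℕ → A) : ℕ → ℕ → A := fun i j => x (i + 1) (j + 1)

/-- The diagonal entry `(i, i)` merges `x (i+1) (i+1)`, `x (i+1) (i+2)`, `x (i+2) (i+1)` with the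
weights `1/2, 1/4, 1/4` they have relative to one another in `Mᵢ (Mⱼ xᵢⱼ)`, so that
`Mᵢ (Mⱼ xᵢⱼ) = m (hook m x 0) (Mᵢ (Mⱼ (deflate m x)ᵢⱼ))`. -/
def deflate (m : A → A → A) (x : ℕ → ℕ → A) : ℕ → ℕ → A := fun i j =>
  if i < j then x i (j + 1) else if j < i then x (i + 1) j
  else m (m (x (i + 1) (i + 2)) (x (i + 2) (i + 1))) (x (i + 1) (i + 1))

def hook (m : A → A → A) (x : ℕ → ℕ → A) (l : ℕ) : A :=
  m (mfold m (l + 1) (fun i => if i ≤ l then x i (l + 1) else x l l))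
    (mfold m (l + 1) (fun i => if i ≤ l then x (l + 1) i else x l l))

theorem deflate_diagShift (x : ℕ → ℕ → A) :
    deflate m (diagShift x) = diagShift (deflate m x) := by
  funext i j
  simp only [deflate, diagShift, Nat.add_lt_add_iff_right]

theorem hook_zero (x : ℕ → ℕ → A) : hook m x 0 = m (m (x 0 1) (x 0 0)) (m (x 1 0) (x 0 0)) :=
  rfl

theorem hook_succ (hm : IsMidpoint m) (x : ℕ → ℕ → A) (l : ℕ) :
    hook m x (l + 1) = hook m (deflate m x) l := by
  rw [hook, mfold_succ_eq_mfold_merge_last (l + 1), mfold_succ_eq_mfold_merge_last (l + 1),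
    ← mfold_pointwise_m hm, hook, ← mfold_pointwise_m hm]
  refine mfold_congr _ fun i hi => ?_
  obtain hi | rfl := Nat.lt_or_eq_of_le hi
  · simp only [deflate, Nat.ne_of_lt hi, Nat.le_of_lt_succ hi, hi, Nat.le_succ_of_le, if_true,
      if_false, not_lt_of_gt hi]
  · simp only [deflate, if_true, le_refl, lt_irrefl, if_false, Nat.not_succ_le_self, hm.idem]
    rw [hm.medial, hm.idem]

theorem hook_eq_hook_zero_iterate (hm : IsMidpoint m) :
    ∀ (l : ℕ) (x : ℕ → ℕ → A), hook m x l = hook m ((deflate m)^[l] x) 0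
  | 0, _ => rfl
  | l + 1, x => by rw [hook_succ hm, hook_eq_hook_zero_iterate hm l, Function.iterate_succ_apply]

namespace Unfolding

variable (hm : IsMidpoint m) (hit : Iterative m) (hM : Unfolding m M)
include hm hit hM

theorem M_M_peel (z : ℕ → ℕ → A) :
    (M fun i => M (z i)) =
      m (M (z 0)) (m (M fun i => z (i + 1) 0) (M fun i => M (diagShift z i))) := by
  rw [hM fun i => M (z i)]
  congr 1
  rw [← hM.M_pointwise_m hm hit]
  congr 1
  funext i
  exact hM (z (i + 1))

theorem hook_deflate_peel (z : ℕ → ℕ → A) :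
    m (hook m z 0) (M fun i => M (deflate m z i)) =
      m (M (z 0)) (m (M fun i => z (i + 1) 0)
        (m (hook m (diagShift z) 0) (M fun i => M (deflate m (diagShift z) i)))) := by
  have hrow : M (z 0) = m (z 0 0) (m (z 0 1) (M fun j => z 0 (j + 2))) := by
    rw [hM, hM]
  have hcol : (M fun i => z (i + 1) 0) = m (z 1 0) (M fun i => z (i + 2) 0) := hM _
  have hrowD : M (deflate m z 0) =
      m (m (m (z 1 2) (z 2 1)) (z 1 1)) (M fun j => z 0 (j + 2)) := by
    rw [hM]
    simp only [deflate, lt_irrefl, if_false, Nat.succ_pos, if_true]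
  rw [hM.M_M_peel hm hit (deflate m z), hrowD, hrow, hcol, hook_zero, hook_zero,
    deflate_diagShift]
  exact hm.peel_rearrange _ _ _ _ _ _ _ _ _

theorem M_M_eq_hook_deflate (z : ℕ → ℕ → A) :
    (M fun i => M (z i)) = m (hook m z 0) (M fun i => M (deflate m z i)) := by
  have := hit.eq_of_rec₂ (fun z => M (z 0)) (fun z => M fun i => z (i + 1) 0) diagShift
    (hM.M_M_peel hm hit) (hM.hook_deflate_peel hm hit)
  exact congrFun this z

end Unfolding

end Flattening

/-- Flattening: nested applications of `M` reduce to a single application over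
terms built from the binary `m` alone. -/
theorem flattening (A : Type) (m : A → A → A) (hm : IsMidpoint m) (hit : Iterative m)
    (M : (ℕ → A) → A) (hM : Unfolding m M) :
    ∀ x : ℕ → ℕ → A,
      M (fun i => M (fun j => x i j)) =
        M (fun l => m
          (mfold m (l + 1) (fun i => if i ≤ l then x i (l + 1) else x l l))
          (mfold m (l + 1) (fun i => if i ≤ l then x (l + 1) i else x l l))) := by
  intro x
  refine hit.canonicity hM (hook m x) (fun l => M fun i => M ((deflate m)^[l] x i)) fun l => ?_
  rw [hM.M_M_eq_hook_deflate hm hit, hook_eq_hook_zero_iterate hm l x,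
    Function.iterate_succ_apply']
end

section
/- Every cancellative superconvex set is iterative: if X is a superconvex set such that for all λ ∈ (0,1), λ·x + (1−λ)·z = λ·y + (1−λ)·z implies x = y, then for all sequences (xᵢ), (yᵢ) in X and weights λᵢ, μᵢ ∈ (0,1) with λᵢ + μᵢ = 1, xᵢ = λᵢ·yᵢ + μᵢ·x_{i+1} for all i, and lim_{n→∞} Π_{i<n} μᵢ = 0, it holds that x₀ = Σ'ᵢ (λᵢ Π_{j<i} μⱼ)·yᵢ. -/
/-- A superconvex weight: a nonnegative sequence summing to 1. -/
def IsWeight (lam : ℕ → ℝ) : Prop := (∀ i, 0 ≤ lam i) ∧ ∑' i, lam i = 1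

/-- A superconvex structure on `X`: an operation of countable convex combination,
satisfying the projection and composition laws (on genuine weights). -/
structure SuperconvexStr (X : Type) where
  comb : (ℕ → ℝ) → (ℕ → X) → X
  proj : ∀ lam, IsWeight lam → ∀ k, lam k = 1 → (∀ i, i ≠ k → lam i = 0) →
    ∀ x, comb lam x = x k
  compos : ∀ lam, IsWeight lam → ∀ mu : ℕ → ℕ → ℝ, (∀ i, IsWeight (mu i)) →
    ∀ x : ℕ → X, comb lam (fun i => comb (mu i) x) = comb (fun j => ∑' i, lam i * mu i j) x

/-- The binary combination `λ·x + (1-λ)·y`. -/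
def SuperconvexStr.pair {X : Type} (S : SuperconvexStr X) (lam : ℝ) (x y : X) : X :=
  S.comb (fun i => if i = 0 then lam else if i = 1 then 1 - lam else 0)
    (fun i => if i = 0 then x else y)

/-- Cancellativity of a superconvex structure. -/
def SuperconvexStr.Cancellative {X : Type} (S : SuperconvexStr X) : Prop :=
  ∀ lam : ℝ, 0 < lam → lam < 1 → ∀ x y z : X, S.pair lam x z = S.pair lam y z → x = y

/-- Iterativity of a superconvex structure. -/
def SuperconvexStr.Iterative {X : Type} (S : SuperconvexStr X) : Prop :=
  ∀ (x y : ℕ → X) (lam mu : ℕ → ℝ),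
    (∀ i, 0 < lam i ∧ lam i < 1) → (∀ i, 0 < mu i ∧ mu i < 1) →
    (∀ i, lam i + mu i = 1) →
    (∀ i, x i = S.pair (lam i) (y i) (x (i + 1))) →
    Filter.Tendsto (fun n => ∏ j ∈ Finset.range n, mu j) Filter.atTop (nhds 0) →
    x 0 = S.comb (fun i => lam i * ∏ j ∈ Finset.range i, mu j) y

/-!
The tails `cₖ = Σ'ᵢ (λ_{k+i} ∏_{j<i} μ_{k+j})·y_{k+i}` solve the same recursion
`cₖ = λₖ·yₖ + μₖ·c_{k+1}` as `x`, so it suffices that two solutions `x`, `c` of the recursion agree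
at `0`. Grouping the recursion along a subsequence we may assume `∏_{j<k} μⱼ ≤ 2⁻ᵏ`, so that
`sₖ = 2ᵏ ∏_{j<k} μⱼ ≤ 1`. Then `aₖ = sₖ·xₖ + (1-sₖ)·x₀` and `bₖ = sₖ·cₖ + (1-sₖ)·x₀` satisfy
`⅓·a_{k+1} + ⅔·bₖ = ⅓·b_{k+1} + ⅔·aₖ`. Averaging these identities with weights `2^{-(k+1)}` turns
the two sides into `⅓·b₀ + ⅔·Θ` and `⅓·a₀ + ⅔·Θ` for one and the same `Θ`, and cancellation gives
`x₀ = a₀ = b₀ = c₀`.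
-/

open Finset Function Filter Topology

theorem IsWeight.summable {g : ℕ → ℝ} (hg : IsWeight g) : Summable g := by
  by_contra h
  simpa [tsum_eq_zero_of_not_summable h] using hg.2

theorem isWeight_single (k : ℕ) : IsWeight (Pi.single k 1) :=
  ⟨fun i => by rw [Pi.single_apply]; split_ifs <;> norm_num, by simp⟩

theorem IsWeight.mix {U V : ℕ → ℝ} (hU : IsWeight U) (hV : IsWeight V) {t : ℝ}
    (ht₀ : 0 ≤ t) (ht₁ : t ≤ 1) : IsWeight (fun j => t * U j + (1 - t) * V j) := by
  refine ⟨fun j => add_nonneg (mul_nonneg ht₀ (hU.1 j)) (mul_nonneg (by linarith) (hV.1 j)), ?_⟩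
  rw [(hU.summable.mul_left t).tsum_add (hV.summable.mul_left _), tsum_mul_left, tsum_mul_left,
    hU.2, hV.2]
  ring

theorem IsWeight.extend {g : ℕ → ℝ} (hg : IsWeight g) {φ : ℕ → ℕ} (hφ : Injective φ) :
    IsWeight (extend φ g 0) := by
  refine ⟨fun j => ?_, by rw [tsum_extend_zero hφ, hg.2]⟩
  by_cases h : ∃ k, φ k = j
  · obtain ⟨k, rfl⟩ := h
    rw [hφ.extend_apply]
    exact hg.1 k
  · rw [extend_apply' _ _ _ h]
    rfl

theorem hasSum_mul_single_comp (g : ℕ → ℝ) {φ : ℕ → ℕ} (hφ : Injective φ) (j : ℕ) :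
    HasSum (fun k => g k * (Pi.single (φ k) 1 : ℕ → ℝ) j) (extend φ g 0 j) := by
  by_cases h : ∃ k, φ k = j
  · obtain ⟨k, rfl⟩ := h
    rw [hφ.extend_apply]
    convert hasSum_single k fun k' hk' => ?_ using 1
    · simp
    · simp [hφ.ne hk']
  · rw [extend_apply' _ _ _ h, Pi.zero_apply]
    push Not at h
    convert hasSum_zero with k
    simp [(h k).symm]

theorem exists_monotone_le_half_pow {u : ℕ → ℝ} (hu : Tendsto u atTop (𝓝 0)) (hu₀ : u 0 ≤ 1) :
    ∃ n : ℕ → ℕ, Monotone n ∧ n 0 = 0 ∧ ∀ k, u (n k) ≤ (1 / 2) ^ k := by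
  classical
  have h : ∀ k : ℕ, ∃ m, u m ≤ (1 / 2) ^ k :=
    fun k => (hu.eventually (ge_mem_nhds (by positivity))).exists
  refine ⟨fun k => Nat.find (h k), fun a b hab => Nat.find_mono fun m hm => ?_,
    Nat.find_eq_zero _ |>.2 (by simpa using hu₀), fun k => Nat.find_spec (h k)⟩
  exact hm.trans (pow_le_pow_of_le_one (by norm_num) (by norm_num) hab)

def iterWeight (lam : ℕ → ℝ) (i : ℕ) : ℝ := lam i * ∏ j ∈ range i, (1 - lam j)

theorem sum_range_iterWeight (lam : ℕ → ℝ) (m : ℕ) :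
    ∑ i ∈ range m, iterWeight lam i = 1 - ∏ j ∈ range m, (1 - lam j) := by
  induction m with
  | zero => simp
  | succ m ih => rw [sum_range_succ, ih, prod_range_succ, iterWeight]; ring

theorem isWeight_iterWeight {lam : ℕ → ℝ} (hlam : ∀ i, 0 ≤ lam i ∧ lam i ≤ 1)
    (hlim : Tendsto (fun n => ∏ j ∈ range n, (1 - lam j)) atTop (𝓝 0)) :
    IsWeight (iterWeight lam) := by
  have hnn : ∀ i, 0 ≤ iterWeight lam i := fun i =>
    mul_nonneg (hlam i).1 (prod_nonneg fun j _ => by linarith [(hlam j).2])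
  refine ⟨hnn, ((hasSum_iff_tendsto_nat_of_nonneg hnn 1).2 ?_).tsum_eq⟩
  simp_rw [sum_range_iterWeight]
  simpa using tendsto_const_nhds.sub hlim

theorem iterWeight_succ_div {lam : ℕ → ℝ} (h : lam 0 ≠ 1) (i : ℕ) :
    iterWeight lam (i + 1) / (1 - lam 0) = iterWeight (fun j => lam (j + 1)) i := by
  have : 1 - lam 0 ≠ 0 := sub_ne_zero.2 h.symm
  rw [iterWeight, iterWeight, prod_range_succ']
  field_simp

theorem tendsto_prod_shift {lam : ℕ → ℝ} (hlam : ∀ i, lam i ≠ 1)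
    (hlim : Tendsto (fun n => ∏ j ∈ range n, (1 - lam j)) atTop (𝓝 0)) (k : ℕ) :
    Tendsto (fun n => ∏ j ∈ range n, (1 - lam (j + k))) atTop (𝓝 0) := by
  have hP : ∏ j ∈ range k, (1 - lam j) ≠ 0 :=
    prod_ne_zero_iff.2 fun j _ => sub_ne_zero.2 (hlam j).symm
  have := ((tendsto_add_atTop_iff_nat k).2 hlim).div_const (∏ j ∈ range k, (1 - lam j))
  rw [zero_div] at this
  refine this.congr fun n => ?_
  simp_rw [add_comm _ k]
  rw [prod_range_add, mul_div_cancel_left₀ _ hP]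

namespace SuperconvexStr

variable {X : Type} (S : SuperconvexStr X)

theorem comb_single (k : ℕ) (e : ℕ → X) : S.comb (Pi.single k 1) e = e k :=
  S.proj _ (isWeight_single k) k (by simp) (fun i hi => by simp [hi]) e

theorem comb_comp {g : ℕ → ℝ} (hg : IsWeight g) {φ : ℕ → ℕ} (hφ : Injective φ) (e : ℕ → X) :
    S.comb g (fun k => e (φ k)) = S.comb (extend φ g 0) e := by
  simp_rw [← S.comb_single _ e]
  rw [S.compos g hg _ (fun k => isWeight_single (φ k)) e]
  exact congrArg (S.comb · e) (funext fun j => (hasSum_mul_single_comp g hφ j).tsum_eq)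

theorem pair_comb {U V : ℕ → ℝ} (hU : IsWeight U) (hV : IsWeight V) {t : ℝ} (ht₀ : 0 ≤ t)
    (ht₁ : t ≤ 1) (e : ℕ → X) :
    S.pair t (S.comb U e) (S.comb V e) = S.comb (fun j => t * U j + (1 - t) * V j) e := by
  have hw : IsWeight (fun i => if i = 0 then t else if i = 1 then 1 - t else 0) := by
    refine ⟨fun i => by dsimp only; split_ifs <;> linarith, ?_⟩
    rw [tsum_eq_sum (s := range 2) (fun i hi => by simp at hi; simp [show i ≠ 0 by omega,
      show i ≠ 1 by omega])]
    simp [sum_range_succ]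
  have hUV : (fun i => if i = 0 then S.comb U e else S.comb V e)
      = fun i => S.comb (if i = 0 then U else V) e := by
    funext i; split_ifs <;> rfl
  rw [pair, hUV, S.compos _ hw _ (fun i => by split_ifs; exacts [hU, hV])]
  congr 1
  funext j
  rw [tsum_eq_sum (s := range 2) (fun i hi => by simp at hi; simp [show i ≠ 0 by omega,
      show i ≠ 1 by omega])]
  simp [sum_range_succ]

theorem pair_one (A B : X) : S.pair 1 A B = A := by
  let e : ℕ → X := fun i => if i = 0 then A else B
  have hA : A = S.comb (Pi.single 0 1) e := (S.comb_single 0 e).symm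
  have hB : B = S.comb (Pi.single 1 1) e := (S.comb_single 1 e).symm
  rw [hA, hB, S.pair_comb (isWeight_single 0) (isWeight_single 1) zero_le_one le_rfl]
  simp

theorem pair_comm {t : ℝ} (ht₀ : 0 ≤ t) (ht₁ : t ≤ 1) (A B : X) :
    S.pair t A B = S.pair (1 - t) B A := by
  let e : ℕ → X := fun i => if i = 0 then A else B
  have hA : A = S.comb (Pi.single 0 1) e := (S.comb_single 0 e).symm
  have hB : B = S.comb (Pi.single 1 1) e := (S.comb_single 1 e).symm
  rw [hA, hB, S.pair_comb (isWeight_single 0) (isWeight_single 1) ht₀ ht₁,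
    S.pair_comb (isWeight_single 1) (isWeight_single 0) (by linarith) (by linarith)]
  congr 1
  funext j
  ring

theorem pair_zero (A B : X) : S.pair 0 A B = B := by
  rw [S.pair_comm le_rfl zero_le_one, sub_zero, pair_one]

theorem pair_assoc {a b : ℝ} (ha₀ : 0 ≤ a) (ha₁ : a ≤ 1) (hb₀ : 0 ≤ b) (hb₁ : b ≤ 1)
    (A B C : X) :
    S.pair a A (S.pair b B C)
      = S.pair (a + (1 - a) * b) (S.pair (a / (a + (1 - a) * b)) A B) C := by
  set c := a + (1 - a) * b
  have hac : a ≤ c := le_add_of_nonneg_right (mul_nonneg (by linarith) hb₀)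
  have hc₁ : c ≤ 1 := by nlinarith
  have hca : c * (a / c) = a := by
    rcases eq_or_ne c 0 with h | h
    · rw [h, zero_mul]; linarith
    · exact mul_div_cancel₀ a h
  let e : ℕ → X := fun i => if i = 0 then A else if i = 1 then B else C
  have hA : A = S.comb (Pi.single 0 1) e := (S.comb_single 0 e).symm
  have hB : B = S.comb (Pi.single 1 1) e := (S.comb_single 1 e).symm
  have hC : C = S.comb (Pi.single 2 1) e := (S.comb_single 2 e).symm
  have hq₀ : 0 ≤ a / c := div_nonneg ha₀ (ha₀.trans hac)
  have hq₁ : a / c ≤ 1 := div_le_one_of_le₀ hac (ha₀.trans hac)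
  rw [hA, hB, hC, S.pair_comb (isWeight_single 1) (isWeight_single 2) hb₀ hb₁,
    S.pair_comb (isWeight_single 0) ((isWeight_single 1).mix (isWeight_single 2) hb₀ hb₁) ha₀ ha₁,
    S.pair_comb (isWeight_single 0) (isWeight_single 1) hq₀ hq₁,
    S.pair_comb ((isWeight_single 0).mix (isWeight_single 1) hq₀ hq₁) (isWeight_single 2)
      (ha₀.trans hac) hc₁]
  congr 1
  funext j
  linear_combination ((Pi.single 1 1 : ℕ → ℝ) j - (Pi.single 0 1 : ℕ → ℝ) j) * hca

theorem pair_third_half_left_comm (A B C : X) :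
    S.pair (1 / 3) A (S.pair (1 / 2) B C) = S.pair (1 / 3) B (S.pair (1 / 2) A C) := by
  let e : ℕ → X := fun i => if i = 0 then A else if i = 1 then B else C
  have hA : A = S.comb (Pi.single 0 1) e := (S.comb_single 0 e).symm
  have hB : B = S.comb (Pi.single 1 1) e := (S.comb_single 1 e).symm
  have hC : C = S.comb (Pi.single 2 1) e := (S.comb_single 2 e).symm
  have h₀ : (0 : ℝ) ≤ 1 / 2 := by norm_num
  have h₁ : (1 : ℝ) / 2 ≤ 1 := by norm_num
  rw [hA, hB, hC, S.pair_comb (isWeight_single 1) (isWeight_single 2) h₀ h₁,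
    S.pair_comb (isWeight_single 0) (isWeight_single 2) h₀ h₁,
    S.pair_comb (isWeight_single 0) ((isWeight_single 1).mix (isWeight_single 2) h₀ h₁)
      (by norm_num) (by norm_num),
    S.pair_comb (isWeight_single 1) ((isWeight_single 0).mix (isWeight_single 2) h₀ h₁)
      (by norm_num) (by norm_num)]
  congr 1
  funext j
  ring

/-- Both sides give `A` and `C` the same mass `2s(1-l)/3`. -/
theorem pair_third_swap {s l : ℝ} (hs₀ : 0 ≤ s) (hs₁ : s ≤ 1) (hl₀ : 0 ≤ l) (hl₁ : l ≤ 1)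
    (hsl : 2 * s * (1 - l) ≤ 1) (A B C D : X) :
    S.pair (1 / 3) (S.pair (2 * s * (1 - l)) A D) (S.pair s (S.pair l B C) D)
      = S.pair (1 / 3) (S.pair (2 * s * (1 - l)) C D) (S.pair s (S.pair l B A) D) := by
  let e : ℕ → X := fun i => if i = 0 then A else if i = 1 then B else if i = 2 then C else D
  have hA : A = S.comb (Pi.single 0 1) e := (S.comb_single 0 e).symm
  have hB : B = S.comb (Pi.single 1 1) e := (S.comb_single 1 e).symm
  have hC : C = S.comb (Pi.single 2 1) e := (S.comb_single 2 e).symm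
  have hD : D = S.comb (Pi.single 3 1) e := (S.comb_single 3 e).symm
  have hsl₀ : 0 ≤ 2 * s * (1 - l) := by nlinarith
  have h₀ : (0 : ℝ) ≤ 1 / 3 := by norm_num
  have h₁ : (1 : ℝ) / 3 ≤ 1 := by norm_num
  have w₁₂ := (isWeight_single 1).mix (isWeight_single 2) hl₀ hl₁
  have w₁₀ := (isWeight_single 1).mix (isWeight_single 0) hl₀ hl₁
  rw [hA, hB, hC, hD,
    S.pair_comb (isWeight_single 0) (isWeight_single 3) hsl₀ hsl,
    S.pair_comb (isWeight_single 1) (isWeight_single 2) hl₀ hl₁,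
    S.pair_comb w₁₂ (isWeight_single 3) hs₀ hs₁,
    S.pair_comb ((isWeight_single 0).mix (isWeight_single 3) hsl₀ hsl)
      (w₁₂.mix (isWeight_single 3) hs₀ hs₁) h₀ h₁,
    S.pair_comb (isWeight_single 2) (isWeight_single 3) hsl₀ hsl,
    S.pair_comb (isWeight_single 1) (isWeight_single 0) hl₀ hl₁,
    S.pair_comb w₁₀ (isWeight_single 3) hs₀ hs₁,
    S.pair_comb ((isWeight_single 2).mix (isWeight_single 3) hsl₀ hsl)
      (w₁₀.mix (isWeight_single 3) hs₀ hs₁) h₀ h₁]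
  congr 1
  funext j
  ring

theorem comb_pair {g : ℕ → ℝ} (hg : IsWeight g) {t : ℝ} (ht₀ : 0 ≤ t) (ht₁ : t ≤ 1)
    (f h : ℕ → X) :
    S.comb g (fun k => S.pair t (f k) (h k)) = S.pair t (S.comb g f) (S.comb g h) := by
  let e : ℕ → X := fun j => if j % 2 = 0 then f (j / 2) else h (j / 2)
  have hf : f = fun k => e (2 * k) := funext fun k => by simp [e]
  have hh : h = fun k => e (2 * k + 1) := funext fun k => by
    simp [e, show (2 * k + 1) % 2 = 1 by omega, show (2 * k + 1) / 2 = k by omega]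
  have hinj₀ : Injective fun k => 2 * k := fun a b hab => by simp at hab; omega
  have hinj₁ : Injective fun k => 2 * k + 1 := fun a b hab => by simp at hab; omega
  have hpair : ∀ k, S.pair t (f k) (h k) = S.comb (fun j => t * (Pi.single (2 * k) 1 : ℕ → ℝ) j
      + (1 - t) * (Pi.single (2 * k + 1) 1 : ℕ → ℝ) j) e := fun k => by
    rw [← S.pair_comb (isWeight_single _) (isWeight_single _) ht₀ ht₁, S.comb_single,
      S.comb_single, hf, hh]
  rw [funext hpair, S.compos g hg _ (fun k => (isWeight_single _).mix (isWeight_single _) ht₀ ht₁),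
    hf, hh, S.comb_comp hg hinj₀, S.comb_comp hg hinj₁,
    S.pair_comb (hg.extend hinj₀) (hg.extend hinj₁) ht₀ ht₁]
  congr 1
  funext j
  refine (tsum_congr fun k => by ring).trans (((hasSum_mul_single_comp g hinj₀ j).mul_left t).add
    ((hasSum_mul_single_comp g hinj₁ j).mul_left (1 - t))).tsum_eq

theorem comb_eq_pair_tail {g : ℕ → ℝ} (hg : IsWeight g) (hg₀ : g 0 < 1) (f : ℕ → X) :
    S.comb g f
      = S.pair (g 0) (f 0) (S.comb (fun k => g (k + 1) / (1 - g 0)) (fun k => f (k + 1))) := by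
  have hpos : 0 < 1 - g 0 := by linarith
  have htail : IsWeight fun k => g (k + 1) / (1 - g 0) := by
    refine ⟨fun k => div_nonneg (hg.1 _) hpos.le, ?_⟩
    rw [tsum_div_const, div_eq_one_iff_eq hpos.ne', ← hg.2, hg.summable.tsum_eq_zero_add]
    ring
  rw [S.comb_comp htail (Nat.succ_injective), ← S.comb_single 0 f,
    S.pair_comb (isWeight_single 0) (htail.extend Nat.succ_injective) (hg.1 0) hg₀.le]
  congr 1
  funext j
  cases j with
  | zero => simp
  | succ j =>
    rw [Nat.succ_injective.extend_apply]
    field_simp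
    simp

def SolvesIteration (lam : ℕ → ℝ) (y x : ℕ → X) : Prop :=
  ∀ i, x i = S.pair (lam i) (y i) (x (i + 1))

theorem exists_unrolling {lam : ℕ → ℝ} (hlam : ∀ i, 0 ≤ lam i ∧ lam i ≤ 1) (y : ℕ → X)
    {t m : ℕ} (htm : t ≤ m) :
    ∃ (Λ : ℝ) (Y : X), 0 ≤ Λ ∧ Λ ≤ 1 ∧ 1 - Λ = ∏ j ∈ Ico t m, (1 - lam j) ∧
      ∀ x, S.SolvesIteration lam y x → x t = S.pair Λ Y (x m) := by
  induction m, htm using Nat.le_induction with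
  | base => exact ⟨0, y t, le_rfl, zero_le_one, by simp, fun x _ => (S.pair_zero _ _).symm⟩
  | succ m htm ih =>
    obtain ⟨Λ, Y, hΛ₀, hΛ₁, hprod, hx⟩ := ih
    obtain ⟨hl₀, hl₁⟩ := hlam m
    refine ⟨Λ + (1 - Λ) * lam m, S.pair (Λ / (Λ + (1 - Λ) * lam m)) Y (y m), by nlinarith,
      by nlinarith, by rw [prod_Ico_succ_top htm, ← hprod]; ring, fun x hsol => ?_⟩
    rw [hx x hsol, hsol m, S.pair_assoc hΛ₀ hΛ₁ hl₀ hl₁]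

theorem exists_grouping {lam : ℕ → ℝ} (hlam : ∀ i, 0 ≤ lam i ∧ lam i ≤ 1) (y : ℕ → X)
    {n : ℕ → ℕ} (hn : Monotone n) :
    ∃ (Λ : ℕ → ℝ) (Y : ℕ → X), (∀ k, 0 ≤ Λ k ∧ Λ k ≤ 1) ∧
      (∀ k, ∏ j ∈ range k, (1 - Λ j) = ∏ j ∈ Ico (n 0) (n k), (1 - lam j)) ∧
      ∀ x, S.SolvesIteration lam y x → S.SolvesIteration Λ Y (fun k => x (n k)) := by
  choose Λ Y hΛ₀ hΛ₁ hprod hsol using fun k => S.exists_unrolling hlam y (hn (Nat.le_succ k))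
  refine ⟨Λ, Y, fun k => ⟨hΛ₀ k, hΛ₁ k⟩, fun k => ?_, fun x hx k => hsol k x hx⟩
  induction k with
  | zero => simp
  | succ k ih =>
    rw [prod_range_succ, ih, hprod, prod_Ico_consecutive _ (hn k.zero_le) (hn k.le_succ)]

theorem solvesIteration_tail {lam : ℕ → ℝ} (hlam : ∀ i, 0 ≤ lam i ∧ lam i < 1)
    (hlim : Tendsto (fun n => ∏ j ∈ range n, (1 - lam j)) atTop (𝓝 0)) (y : ℕ → X) :
    S.SolvesIteration lam y
      fun k => S.comb (iterWeight fun i => lam (i + k)) fun i => y (i + k) := by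
  intro k
  dsimp only
  have hw : IsWeight (iterWeight fun i => lam (i + k)) :=
    isWeight_iterWeight (fun i => ⟨(hlam _).1, (hlam _).2.le⟩)
      (tendsto_prod_shift (fun i => (hlam i).2.ne) hlim k)
  have h₀ : iterWeight (fun i => lam (i + k)) 0 = lam k := by simp [iterWeight]
  have htail : (fun j => iterWeight (fun i => lam (i + k)) (j + 1) / (1 - lam k))
      = iterWeight fun i => lam (i + (k + 1)) := funext fun j => by
    simpa [add_assoc, add_comm 1 k] using
      iterWeight_succ_div (lam := fun i => lam (i + k)) (by simpa using (hlam k).2.ne) j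
  rw [S.comb_eq_pair_tail hw (h₀ ▸ (hlam k).2), h₀, htail]
  simp only [zero_add, add_assoc, add_comm 1 k]

section

variable {S}

theorem Cancellative.eq_of_pair_third_succ (hc : S.Cancellative) {u v : ℕ → X}
    (h : ∀ k, S.pair (1 / 3) (u (k + 1)) (v k) = S.pair (1 / 3) (v (k + 1)) (u k)) :
    u 0 = v 0 := by
  let g : ℕ → ℝ := fun k => 1 / 2 / 2 ^ k
  have hg : IsWeight g := ⟨fun k => by positivity, tsum_geometric_two' 1⟩
  have hpeel : ∀ f : ℕ → X, S.comb g f = S.pair (1 / 2) (f 0) (S.comb g fun k => f (k + 1)) := by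
    intro f
    have hg₀ : g 0 = 1 / 2 := by norm_num [g]
    have hgs : (fun k => g (k + 1) / (1 - g 0)) = g := funext fun k => by
      simp only [g, pow_succ]; field_simp; ring
    rw [S.comb_eq_pair_tail hg (by norm_num [hg₀]) f, hgs, hg₀]
  set U := S.comb g fun k => u (k + 1)
  set V := S.comb g fun k => v (k + 1)
  have h₀ : (0 : ℝ) ≤ 1 / 3 := by norm_num
  have h₁ : (1 : ℝ) / 3 ≤ 1 := by norm_num
  have hv : S.comb g (fun k => S.pair (1 / 3) (u (k + 1)) (v k))
      = S.pair (1 / 3) (v 0) (S.pair (1 / 2) U V) := by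
    rw [S.comb_pair hg h₀ h₁, hpeel v, S.pair_third_half_left_comm]
  have hu : S.comb g (fun k => S.pair (1 / 3) (v (k + 1)) (u k))
      = S.pair (1 / 3) (u 0) (S.pair (1 / 2) U V) := by
    rw [S.comb_pair hg h₀ h₁, hpeel u, S.pair_third_half_left_comm,
      S.pair_comm (t := 1 / 2) (by norm_num) (by norm_num) V,
      show (1 : ℝ) - 1 / 2 = 1 / 2 by norm_num]
  exact (hc (1 / 3) (by norm_num) (by norm_num) _ _ _ (by rw [← hv, ← hu, funext h])).symm

theorem Cancellative.eq_of_prod_le_half_pow (hc : S.Cancellative) {lam : ℕ → ℝ}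
    (hlam : ∀ i, 0 ≤ lam i ∧ lam i ≤ 1) (hP : ∀ k, ∏ j ∈ range k, (1 - lam j) ≤ (1 / 2) ^ k)
    {y x x' : ℕ → X} (hx : S.SolvesIteration lam y x) (hx' : S.SolvesIteration lam y x') :
    x 0 = x' 0 := by
  set s : ℕ → ℝ := fun k => 2 ^ k * ∏ j ∈ range k, (1 - lam j) with hs
  have hs₀ : ∀ k, 0 ≤ s k := fun k =>
    mul_nonneg (by positivity) (prod_nonneg fun j _ => by linarith [(hlam j).2])
  have hs₁ : ∀ k, s k ≤ 1 := fun k => calc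
    s k ≤ 2 ^ k * (1 / 2) ^ k := mul_le_mul_of_nonneg_left (hP k) (by positivity)
    _ = 1 := by rw [← mul_pow]; norm_num
  have hs_succ : ∀ k, s (k + 1) = 2 * s k * (1 - lam k) := fun k => by
    simp only [hs, prod_range_succ, pow_succ]; ring
  have key : ∀ k, S.pair (1 / 3) (S.pair (s (k + 1)) (x (k + 1)) (x 0)) (S.pair (s k) (x' k) (x 0))
      = S.pair (1 / 3) (S.pair (s (k + 1)) (x' (k + 1)) (x 0)) (S.pair (s k) (x k) (x 0)) := by
    intro k
    have hsl := hs₁ (k + 1)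
    rw [hs_succ] at hsl ⊢
    rw [hx k, hx' k]
    exact S.pair_third_swap (hs₀ k) (hs₁ k) (hlam k).1 (hlam k).2 hsl _ _ _ _
  simpa [hs, pair_one] using hc.eq_of_pair_third_succ (u := fun k => S.pair (s k) (x k) (x 0))
    (v := fun k => S.pair (s k) (x' k) (x 0)) key

theorem Cancellative.eq_of_tendsto_prod (hc : S.Cancellative) {lam : ℕ → ℝ}
    (hlam : ∀ i, 0 ≤ lam i ∧ lam i ≤ 1)
    (hlim : Tendsto (fun n => ∏ j ∈ range n, (1 - lam j)) atTop (𝓝 0))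
    {y x x' : ℕ → X} (hx : S.SolvesIteration lam y x) (hx' : S.SolvesIteration lam y x') :
    x 0 = x' 0 := by
  obtain ⟨n, hn, hn₀, hnP⟩ := exists_monotone_le_half_pow hlim (by simp)
  obtain ⟨Λ, Y, hΛ, hprod, hsol⟩ := S.exists_grouping hlam y hn
  have hP : ∀ k, ∏ j ∈ range k, (1 - Λ j) ≤ (1 / 2) ^ k := fun k => by
    rw [hprod k, hn₀, ← range_eq_Ico]
    exact hnP k
  simpa [hn₀] using hc.eq_of_prod_le_half_pow hΛ hP (hsol x hx) (hsol x' hx')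

end

end SuperconvexStr

/-- Every cancellative superconvex set is iterative. -/
theorem cancellative_superconvex_iterative (X : Type) (S : SuperconvexStr X)
    (hc : S.Cancellative) : S.Iterative := by
  intro x y lam mu hlam _ hsum hrec hlim
  obtain rfl : mu = fun i => 1 - lam i := funext fun i => by linarith [hsum i]
  have htail := S.solvesIteration_tail (fun i => ⟨(hlam i).1.le, (hlam i).2⟩) hlim y
  exact hc.eq_of_tendsto_prod (fun i => ⟨(hlam i).1.le, (hlam i).2.le⟩) hlim hrec htail
end
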